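/- arXiv:2502.12668 — 3 statements merged into one kernel-verified Lean document; each statement's English description precedes it below -/
import Mathlib

section
/- For a finite set Y, a reference distribution π_ref on Y with full support, a reward function R : Y → ℝ, and β > 0, the maximizer over distributions π on Y of E_{y∼π}[R(y)] − β·KL(π‖π_ref) equals the maximizer over π of the min over all perturbations ΔR : Y → ℝ satisfying Σ_y π_ref(y)·exp(ΔR(y)/β) ≤ 1 of E_{y∼π}[R(y) − ΔR(y)]. That is, KL-regularized reward maximization is equivalent to a robust (max-min) optimization over the exponential-constraint perturbation set. -/
/-!
For every distribution `q`, the inner infimum equals the KL-regularized objective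
`E_q[R] - β KL(q ‖ π_ref)`, so the two problems have the same objective on the simplex and hence
the same maximizers. The inequality `E_q[ΔR] ≤ β KL(q ‖ π_ref)` on the perturbation set is the
Fenchel–Young inequality for `x log x` summed over `Y`. It is approached by the perturbations
`β log(q_δ / π_ref)` with `q_δ = (1 - δ) q + δ π_ref`, which satisfy the constraint with equality
and, by concavity of `log`, lose at most `δ β KL(q ‖ π_ref)`.
-/

open Finset Real Filter Topology

lemma mul_le_mul_log_div_sub_add_mul_exp {q c : ℝ} (s : ℝ) (hq : 0 ≤ q) (hc : 0 < c) :
    q * s ≤ q * log (q / c) - q + c * exp s := by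
  rcases hq.eq_or_lt with rfl | hq
  · simp only [zero_mul, zero_div, log_zero, sub_zero, zero_add]
    positivity
  · have key := add_one_le_exp (s - log (q / c))
    rw [exp_sub, exp_log (by positivity)] at key
    have hexp : q * (exp s / (q / c)) = c * exp s := by field_simp
    nlinarith [mul_le_mul_of_nonneg_left key hq.le]

lemma one_sub_mul_mul_log_div_le {q c δ : ℝ} (hq : 0 ≤ q) (hc : 0 < c)
    (hδ₀ : 0 ≤ δ) (hδ₁ : δ ≤ 1) :
    (1 - δ) * (q * log (q / c)) ≤ q * log (((1 - δ) * q + δ * c) / c) := by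
  rcases hq.eq_or_lt with rfl | hq
  · simp
  have hmix : 0 < (1 - δ) * q + δ * c :=
    convex_Ioi (0 : ℝ) hq hc (sub_nonneg.2 hδ₁) hδ₀ (by ring)
  have hconcave := strictConcaveOn_log_Ioi.concaveOn.2 (Set.mem_Ioi.2 hq) (Set.mem_Ioi.2 hc)
    (sub_nonneg.2 hδ₁) hδ₀ (by ring)
  simp only [smul_eq_mul] at hconcave
  rw [log_div hq.ne' hc.ne', log_div hmix.ne' hc.ne']
  nlinarith [mul_le_mul_of_nonneg_left hconcave hq.le]

section Simplex

variable {Y : Type*} [Fintype Y] {pref q : Y → ℝ} {β : ℝ}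

lemma sum_mul_le_mul_sum_mul_log_div (href : ∀ y, 0 < pref y) (hq₀ : ∀ y, 0 ≤ q y)
    (hq₁ : ∑ y, q y = 1) (hβ : 0 < β) {f : Y → ℝ}
    (hf : ∑ y, pref y * exp (f y / β) ≤ 1) :
    ∑ y, q y * f y ≤ β * ∑ y, q y * log (q y / pref y) := by
  have hpointwise : ∑ y, q y * (f y / β)
      ≤ ∑ y, (q y * log (q y / pref y) - q y + pref y * exp (f y / β)) :=
    sum_le_sum fun y _ => mul_le_mul_log_div_sub_add_mul_exp _ (hq₀ y) (href y)
  rw [sum_add_distrib, sum_sub_distrib, hq₁] at hpointwise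
  have hscale : ∑ y, q y * f y = β * ∑ y, q y * (f y / β) := by
    rw [mul_sum]
    exact sum_congr rfl fun y _ => by field_simp
  rw [hscale]
  exact mul_le_mul_of_nonneg_left (by linarith) hβ.le

lemma exists_sum_mul_exp_div_le_one_and_le_sum_mul (href : ∀ y, 0 < pref y)
    (hrefsum : ∑ y, pref y = 1) (hβ : 0 < β) (hq₀ : ∀ y, 0 ≤ q y) (hq₁ : ∑ y, q y = 1)
    {δ : ℝ} (hδ₀ : 0 < δ) (hδ₁ : δ ≤ 1) :
    ∃ f : Y → ℝ, ∑ y, pref y * exp (f y / β) ≤ 1 ∧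
      (1 - δ) * (β * ∑ y, q y * log (q y / pref y)) ≤ ∑ y, q y * f y := by
  set qδ : Y → ℝ := fun y => (1 - δ) * q y + δ * pref y
  have hqδ (y : Y) : pref y * exp (β * log (qδ y / pref y) / β) = qδ y := by
    have : 0 < qδ y := by nlinarith [hq₀ y, href y]
    rw [mul_div_cancel_left₀ _ hβ.ne', exp_log (div_pos this (href y)),
      mul_div_cancel₀ _ (href y).ne']
  refine ⟨fun y => β * log (qδ y / pref y), ?_, ?_⟩
  · simp only [hqδ, qδ, sum_add_distrib, ← mul_sum, hq₁, hrefsum]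
    linarith
  · have hloss := sum_le_sum fun y (_ : y ∈ univ) =>
      one_sub_mul_mul_log_div_le (hq₀ y) (href y) hδ₀.le hδ₁
    rw [← mul_sum] at hloss
    calc (1 - δ) * (β * ∑ y, q y * log (q y / pref y))
        = β * ((1 - δ) * ∑ y, q y * log (q y / pref y)) := by ring
      _ ≤ β * ∑ y, q y * log (qδ y / pref y) := mul_le_mul_of_nonneg_left hloss hβ.le
      _ = ∑ y, q y * (β * log (qδ y / pref y)) := by
        rw [mul_sum]
        exact sum_congr rfl fun y _ => by ring

theorem iInf_sum_mul_sub_eq_sum_mul_sub_mul_sum_mul_log_div (href : ∀ y, 0 < pref y)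
    (hrefsum : ∑ y, pref y = 1) (R : Y → ℝ) (hβ : 0 < β) (hq₀ : ∀ y, 0 ≤ q y)
    (hq₁ : ∑ y, q y = 1) :
    (⨅ ΔR : {f : Y → ℝ // ∑ y, pref y * exp (f y / β) ≤ 1}, ∑ y, q y * (R y - ΔR.1 y))
      = (∑ y, q y * R y) - β * ∑ y, q y * log (q y / pref y) := by
  set KL := ∑ y, q y * log (q y / pref y)
  have hvalue (f : Y → ℝ) : ∑ y, q y * (R y - f y) = ∑ y, q y * R y - ∑ y, q y * f y := by
    simp only [mul_sub, sum_sub_distrib]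
  have hne : Nonempty {f : Y → ℝ // ∑ y, pref y * exp (f y / β) ≤ 1} :=
    ⟨⟨0, by simp [hrefsum]⟩⟩
  have hlower : ∀ ΔR : {f : Y → ℝ // ∑ y, pref y * exp (f y / β) ≤ 1},
      ∑ y, q y * R y - β * KL ≤ ∑ y, q y * (R y - ΔR.1 y) := fun ⟨f, hf⟩ => by
    rw [hvalue]
    linarith [sum_mul_le_mul_sum_mul_log_div href hq₀ hq₁ hβ hf]
  have hbdd : BddBelow (Set.range fun ΔR : {f : Y → ℝ // ∑ y, pref y * exp (f y / β) ≤ 1} =>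
      ∑ y, q y * (R y - ΔR.1 y)) := ⟨_, Set.forall_mem_range.2 hlower⟩
  refine le_antisymm ?_ (le_ciInf hlower)
  have hlim : Tendsto (fun δ => ∑ y, q y * R y - β * KL + δ * (β * KL)) (𝓝[>] 0)
      (𝓝 (∑ y, q y * R y - β * KL)) :=
    tendsto_nhdsWithin_of_tendsto_nhds <| by
      simpa using ((continuous_mul_const (β * KL)).tendsto 0).const_add _
  refine ge_of_tendsto hlim ?_
  filter_upwards [Ioc_mem_nhdsGT one_pos] with δ ⟨hδ₀, hδ₁⟩
  obtain ⟨f, hf, hloss⟩ :=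
    exists_sum_mul_exp_div_le_one_and_le_sum_mul href hrefsum hβ hq₀ hq₁ hδ₀ hδ₁
  calc _ ≤ ∑ y, q y * (R y - f y) := ciInf_le hbdd ⟨f, hf⟩
    _ ≤ _ := by rw [hvalue]; linarith

end Simplex

theorem kl_regularized_eq_robust_argmax_general
    (Y : Type) [Fintype Y]
    (pref : Y → ℝ) (href : ∀ y, 0 < pref y) (hrefsum : ∑ y, pref y = 1)
    (R : Y → ℝ) (β : ℝ) (hβ : 0 < β) :
    {p : Y → ℝ | ((∀ y, 0 ≤ p y) ∧ ∑ y, p y = 1) ∧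
      ∀ q : Y → ℝ, ((∀ y, 0 ≤ q y) ∧ ∑ y, q y = 1) →
        (∑ y, q y * R y) - β * ∑ y, q y * Real.log (q y / pref y)
          ≤ (∑ y, p y * R y) - β * ∑ y, p y * Real.log (p y / pref y)} =
    {p : Y → ℝ | ((∀ y, 0 ≤ p y) ∧ ∑ y, p y = 1) ∧
      ∀ q : Y → ℝ, ((∀ y, 0 ≤ q y) ∧ ∑ y, q y = 1) →
        (⨅ ΔR : {f : Y → ℝ // ∑ y, pref y * Real.exp (f y / β) ≤ 1},
            ∑ y, q y * (R y - ΔR.1 y))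
          ≤ ⨅ ΔR : {f : Y → ℝ // ∑ y, pref y * Real.exp (f y / β) ≤ 1},
            ∑ y, p y * (R y - ΔR.1 y)} := by
  ext p
  refine and_congr_right fun hp => forall₂_congr fun q hq => ?_
  rw [iInf_sum_mul_sub_eq_sum_mul_sub_mul_sum_mul_log_div href hrefsum R hβ hq.1 hq.2,
    iInf_sum_mul_sub_eq_sum_mul_sub_mul_sum_mul_log_div href hrefsum R hβ hp.1 hp.2]

/-- KL-regularized reward maximization is equivalent (same maximizer set over
distributions) to robust max-min optimization over the exponential-constraint perturbation set. -/
theorem kl_regularized_eq_robust_argmax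
    (Y : Type) [Fintype Y] [Nonempty Y]
    (pref : Y → ℝ) (href : ∀ y, 0 < pref y) (hrefsum : ∑ y, pref y = 1)
    (R : Y → ℝ) (β : ℝ) (hβ : 0 < β) :
    {p : Y → ℝ | ((∀ y, 0 ≤ p y) ∧ ∑ y, p y = 1) ∧
      ∀ q : Y → ℝ, ((∀ y, 0 ≤ q y) ∧ ∑ y, q y = 1) →
        (∑ y, q y * R y) - β * ∑ y, q y * Real.log (q y / pref y)
          ≤ (∑ y, p y * R y) - β * ∑ y, p y * Real.log (p y / pref y)} =
    {p : Y → ℝ | ((∀ y, 0 ≤ p y) ∧ ∑ y, p y = 1) ∧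
      ∀ q : Y → ℝ, ((∀ y, 0 ≤ q y) ∧ ∑ y, q y = 1) →
        (⨅ ΔR : {f : Y → ℝ // ∑ y, pref y * Real.exp (f y / β) ≤ 1},
            ∑ y, q y * (R y - ΔR.1 y))
          ≤ ⨅ ΔR : {f : Y → ℝ // ∑ y, pref y * Real.exp (f y / β) ≤ 1},
            ∑ y, p y * (R y - ΔR.1 y)} :=
  kl_regularized_eq_robust_argmax_general Y pref href hrefsum R β hβ
end

section
/- For a finite set Y with full-support reference distribution π_ref, reward R : Y → ℝ, and β > 0: for every distribution π on Y, the minimum over perturbations ΔR with Σ_y π_ref(y)·exp(ΔR(y)/β) ≤ 1 of E_{y∼π}[R(y) − ΔR(y)] equals E_{y∼π}[R(y)] − β·KL(π‖π_ref). (The inner adversarial minimization recovers exactly the KL regularizer.) -/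
/-!
The constraint `∑ π_ref · exp (ΔR / β) ≤ 1` makes `E_π[ΔR] ≤ β · KL(π‖π_ref)`: termwise this is
`exp x ≥ 1 + x` at `x = ΔR/β - log (π/π_ref)` (Gibbs' inequality). The bound is approached, but
not attained where `π` vanishes, by `ΔR = β log (π_s / π_ref)` for the mixtures
`π_s = (1 - s) π + s π_ref`, which satisfy the constraint with equality and lose at most
`-β log (1 - s)`.
-/

open Finset Real

theorem mul_le_mul_log_div_add_mul_exp_sub {p q : ℝ} (hq : 0 < q) (hp : 0 ≤ p) (g : ℝ) :
    p * g ≤ p * log (p / q) + (q * exp g - p) := by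
  rcases hp.eq_or_lt with rfl | hp
  · simp only [zero_mul, zero_div, log_zero, mul_zero, sub_zero, zero_add]
    positivity
  have h := add_one_le_exp (g - log (p / q))
  rw [exp_sub, exp_log (div_pos hp hq)] at h
  have hpq : p * (exp g / (p / q)) = q * exp g := by field_simp
  nlinarith [mul_le_mul_of_nonneg_left h hp.le]

theorem mul_log_div_add_log_le_mul_log_mix_div {p q s : ℝ} (hq : 0 < q) (hp : 0 ≤ p)
    (hs₀ : 0 < s) (hs₁ : s < 1) :
    p * (log (p / q) + log (1 - s)) ≤ p * log (((1 - s) * p + s * q) / q) := by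
  rcases hp.eq_or_lt with rfl | hp
  · simp
  refine mul_le_mul_of_nonneg_left ?_ hp.le
  rw [← log_mul (div_pos hp hq).ne' (by linarith), ← mul_div_right_comm, mul_comm]
  gcongr
  exact le_add_of_nonneg_right (by positivity)

section GibbsVariational

variable {ι : Type*} [Fintype ι] {p q : ι → ℝ}

theorem sum_mul_le_sum_mul_log_div (hq : ∀ i, 0 < q i) (hp : ∀ i, 0 ≤ p i)
    (hp1 : ∑ i, p i = 1) {g : ι → ℝ} (hg : ∑ i, q i * exp (g i) ≤ 1) :
    ∑ i, p i * g i ≤ ∑ i, p i * log (p i / q i) := by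
  have h := sum_le_sum fun i (_ : i ∈ univ) ↦
    mul_le_mul_log_div_add_mul_exp_sub (hq i) (hp i) (g i)
  rw [sum_add_distrib, sum_sub_distrib, hp1] at h
  linarith

theorem exists_sum_mul_exp_le_one_and_sub_lt (hq : ∀ i, 0 < q i) (hq1 : ∑ i, q i = 1)
    (hp : ∀ i, 0 ≤ p i) (hp1 : ∑ i, p i = 1) {ε : ℝ} (hε : 0 < ε) :
    ∃ g : ι → ℝ, ∑ i, q i * exp (g i) ≤ 1 ∧
      ∑ i, p i * log (p i / q i) - ε < ∑ i, p i * g i := by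
  set s := 1 - exp (-(ε / 2))
  have hs₀ : 0 < s := sub_pos.2 (exp_lt_one_iff.2 (by linarith))
  have hs₁ : s < 1 := sub_lt_self 1 (exp_pos _)
  have hmix (i) : 0 < (1 - s) * p i + s * q i := by
    have := mul_pos hs₀ (hq i)
    have := mul_nonneg (sub_pos.2 hs₁).le (hp i)
    linarith
  refine ⟨fun i ↦ log (((1 - s) * p i + s * q i) / q i), le_of_eq ?_, ?_⟩
  · simp_rw [exp_log (div_pos (hmix _) (hq _)), mul_div_cancel₀ _ (hq _).ne', sum_add_distrib,
      ← mul_sum, hp1, hq1]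
    ring
  · have h := sum_le_sum fun i (_ : i ∈ univ) ↦
      mul_log_div_add_log_le_mul_log_mix_div (hq i) (hp i) hs₀ hs₁
    simp_rw [mul_add, sum_add_distrib, ← sum_mul, hp1, one_mul] at h
    have hlog : log (1 - s) = -(ε / 2) := by simp [s]
    linarith

end GibbsVariational

theorem inner_min_eq_kl_general
    (Y : Type) [Fintype Y]
    (pref : Y → ℝ) (href : ∀ y, 0 < pref y) (hrefsum : ∑ y, pref y = 1)
    (p : Y → ℝ) (hp : ∀ y, 0 ≤ p y) (hpsum : ∑ y, p y = 1)
    (R : Y → ℝ) (β : ℝ) (hβ : 0 < β) :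
    (⨅ ΔR : {f : Y → ℝ // ∑ y, pref y * Real.exp (f y / β) ≤ 1},
        ∑ y, p y * (R y - ΔR.1 y))
      = (∑ y, p y * R y) - β * ∑ y, p y * Real.log (p y / pref y) := by
  have : Nonempty {f : Y → ℝ // ∑ y, pref y * exp (f y / β) ≤ 1} :=
    ⟨⟨0, by simp [hrefsum]⟩⟩
  have hsplit (f : Y → ℝ) :
      ∑ y, p y * (R y - f y) = ∑ y, p y * R y - β * ∑ y, p y * (f y / β) := by
    simp_rw [mul_sum, mul_sub, sum_sub_distrib]
    congr 1
    refine sum_congr rfl fun y _ ↦ ?_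
    field_simp
  refine ciInf_eq_of_forall_ge_of_forall_gt_exists_lt (fun ⟨f, hf⟩ ↦ ?_) (fun w hw ↦ ?_)
  · rw [hsplit]
    have := sum_mul_le_sum_mul_log_div href hp hpsum hf
    gcongr
  · obtain ⟨g, hg, hlt⟩ := exists_sum_mul_exp_le_one_and_sub_lt href hrefsum hp hpsum
      (div_pos (sub_pos.2 hw) hβ)
    refine ⟨⟨fun y ↦ β * g y, by simpa [mul_div_cancel_left₀ _ hβ.ne'] using hg⟩, ?_⟩
    simp only [hsplit, mul_div_cancel_left₀ _ hβ.ne']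
    have := mul_lt_mul_of_pos_left hlt hβ
    rw [mul_sub, mul_div_cancel₀ _ hβ.ne'] at this
    linarith

/-- the inner adversarial minimization over exponentially-constrained
perturbations recovers exactly the KL regularizer. -/
theorem inner_min_eq_kl
    (Y : Type) [Fintype Y] [Nonempty Y]
    (pref : Y → ℝ) (href : ∀ y, 0 < pref y) (hrefsum : ∑ y, pref y = 1)
    (p : Y → ℝ) (hp : ∀ y, 0 ≤ p y) (hpsum : ∑ y, p y = 1)
    (R : Y → ℝ) (β : ℝ) (hβ : 0 < β) :
    (⨅ ΔR : {f : Y → ℝ // ∑ y, pref y * Real.exp (f y / β) ≤ 1},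
        ∑ y, p y * (R y - ΔR.1 y))
      = (∑ y, p y * R y) - β * ∑ y, p y * Real.log (p y / pref y) :=
  inner_min_eq_kl_general Y pref href hrefsum p hp hpsum R β hβ
end

section
/- Linear programming strong duality for optimal transport on finite spaces: the minimum of Σ_{i,j} C(i,j)·γ(i,j) over nonnegative matrices γ with row sums ν and column sums μ equals the maximum of Σ_i f(i)·ν(i) + Σ_j g(j)·μ(j) over functions f, g satisfying f(i) + g(j) ≤ C(i,j) for all i, j. -/
/-!
Couplings form a compact set, so the primal minimum `w` is attained. For `t < w` the point
`(ν, μ, t)` lies outside the compact convex set of (row sums, column sums, cost) of probability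
matrices; a hyperplane separating them has a positive cost coefficient (the set contains
`(ν, μ, w)`), and after rescaling its other coefficients form a dual feasible pair of value above
`t`. The dual supremum is attained because a double `C`-transform, normalised by a constant shift,
does not decrease the dual value and lands in a fixed compact box. Weak duality closes the gap.
-/

open Finset

theorem LinearMap.exists_prod_pi_apply_eq_sum {I J : Type*} [Fintype I] [Fintype J]
    (L : (I → ℝ) × (J → ℝ) × ℝ →ₗ[ℝ] ℝ) :
    ∃ (f : I → ℝ) (g : J → ℝ) (a : ℝ),
      ∀ x, L x = ∑ i, x.1 i * f i + ∑ j, x.2.1 j * g j + x.2.2 * a := by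
  classical
  refine ⟨fun i => L (Pi.single i 1, 0, 0), fun j => L (0, Pi.single j 1, 0), L (0, 0, 1),
    fun x => ?_⟩
  have hx : x = ∑ i, x.1 i • (Pi.single i 1, 0, 0) + ∑ j, x.2.1 j • (0, Pi.single j 1, 0) +
      x.2.2 • ((0 : I → ℝ), (0 : J → ℝ), (1 : ℝ)) := by
    ext <;> simp [Prod.fst_sum, Prod.snd_sum, ← Pi.single_smul, Finset.univ_sum_single]
  conv_lhs => rw [hx]
  simp only [map_add, map_sum, map_smul, smul_eq_mul]

namespace OptimalTransport

variable {I J : Type*}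

def dualFeasible (C : I → J → ℝ) : Set ((I → ℝ) × (J → ℝ)) :=
  {fg | ∀ i j, fg.1 i + fg.2 j ≤ C i j}

theorem isClosed_dualFeasible {C : I → J → ℝ} : IsClosed (dualFeasible C) := by
  simp only [dualFeasible, Set.ofPred_forall]
  exact isClosed_iInter fun i => isClosed_iInter fun j => isClosed_le (by fun_prop) (by fun_prop)

variable [Fintype I]

section cTransform

variable [Nonempty I]

noncomputable def cTransform (C : I → J → ℝ) (f : I → ℝ) (j : J) : ℝ :=
  univ.inf' univ_nonempty fun i => C i j - f i

theorem add_cTransform_le (C : I → J → ℝ) (f : I → ℝ) (i : I) (j : J) :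
    f i + cTransform C f j ≤ C i j := by
  have := inf'_le (fun i => C i j - f i) (mem_univ i)
  rw [cTransform]; linarith

theorem le_cTransform {C : I → J → ℝ} {f : I → ℝ} {g : J → ℝ} (h : ∀ i j, f i + g j ≤ C i j) (j : J) :
    g j ≤ cTransform C f j :=
  le_inf' _ _ fun i _ => le_sub_iff_add_le'.2 (h i j)

theorem exists_add_cTransform_eq (C : I → J → ℝ) (f : I → ℝ) (j : J) :
    ∃ i, f i + cTransform C f j = C i j := by
  obtain ⟨i, -, hi⟩ := exists_mem_eq_inf' univ_nonempty fun i => C i j - f i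
  exact ⟨i, by rw [cTransform, hi]; ring⟩

theorem cTransform_le_cTransform_add {C : I → J → ℝ} {m : ℝ} (hC : ∀ i j, |C i j| ≤ m)
    (f : I → ℝ) (j j' : J) :
    cTransform C f j ≤ cTransform C f j' + 2 * m := by
  obtain ⟨i, hi⟩ := exists_add_cTransform_eq C f j'
  have := add_cTransform_le C f i j
  linarith [(abs_le.1 (hC i j)).2, (abs_le.1 (hC i j')).1]

end cTransform

variable [Fintype J]

def couplings (ν : I → ℝ) (μ : J → ℝ) : Set (I → J → ℝ) :=
  {γ | (∀ i j, 0 ≤ γ i j) ∧ (∀ i, ∑ j, γ i j = ν i) ∧ ∀ j, ∑ i, γ i j = μ j}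

def transportCost (C γ : I → J → ℝ) : ℝ := ∑ i, ∑ j, C i j * γ i j

def dualValue (ν : I → ℝ) (μ : J → ℝ) (fg : (I → ℝ) × (J → ℝ)) : ℝ :=
  ∑ i, fg.1 i * ν i + ∑ j, fg.2 j * μ j

variable {C : I → J → ℝ} {ν : I → ℝ} {μ : J → ℝ}

theorem dualValue_le_transportCost {γ : I → J → ℝ} {fg : (I → ℝ) × (J → ℝ)}
    (hγ : γ ∈ couplings ν μ) (hfg : fg ∈ dualFeasible C) :
    dualValue ν μ fg ≤ transportCost C γ := by
  obtain ⟨hγ_nonneg, hγ_row, hγ_col⟩ := hγ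
  calc dualValue ν μ fg = ∑ i, ∑ j, (fg.1 i + fg.2 j) * γ i j := by
        simp only [dualValue, ← hγ_row, ← hγ_col, mul_sum, add_mul, sum_add_distrib]
        rw [sum_comm (f := fun j i => fg.2 j * γ i j)]
    _ ≤ transportCost C γ :=
        sum_le_sum fun i _ => sum_le_sum fun j _ =>
          mul_le_mul_of_nonneg_right (hfg i j) (hγ_nonneg i j)

theorem productCoupling_mem_couplings (hν : ∀ i, 0 ≤ ν i) (hνsum : ∑ i, ν i = 1)
    (hμ : ∀ j, 0 ≤ μ j) (hμsum : ∑ j, μ j = 1) :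
    (fun i j => ν i * μ j) ∈ couplings ν μ :=
  ⟨fun i j => mul_nonneg (hν i) (hμ j), fun i => by rw [← mul_sum, hμsum, mul_one],
    fun j => by rw [← sum_mul, hνsum, one_mul]⟩

theorem isClosed_couplings : IsClosed (couplings ν μ) := by
  simp only [couplings, Set.ofPred_and, Set.ofPred_forall]
  refine .inter (isClosed_iInter fun i => isClosed_iInter fun j => isClosed_le ?_ ?_) <|
    .inter (isClosed_iInter fun i => isClosed_eq ?_ ?_) (isClosed_iInter fun j => isClosed_eq ?_ ?_)
  all_goals fun_prop

theorem couplings_subset_pi :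
    couplings ν μ ⊆ Set.univ.pi fun i => Set.univ.pi fun _ : J => Set.Icc 0 (ν i) := by
  rintro γ ⟨hγ_nonneg, hγ_row, -⟩ i - j -
  exact ⟨hγ_nonneg i j,
    hγ_row i ▸ single_le_sum (fun j _ => hγ_nonneg i j) (mem_univ j)⟩

theorem isCompact_couplings : IsCompact (couplings ν μ) :=
  (isCompact_univ_pi fun _ => isCompact_univ_pi fun _ => isCompact_Icc).of_isClosed_subset
    isClosed_couplings couplings_subset_pi

theorem exists_isMinOn_transportCost (hν : ∀ i, 0 ≤ ν i) (hνsum : ∑ i, ν i = 1)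
    (hμ : ∀ j, 0 ≤ μ j) (hμsum : ∑ j, μ j = 1) :
    ∃ γ ∈ couplings ν μ, IsMinOn (transportCost C) (couplings ν μ) γ :=
  isCompact_couplings.exists_isMinOn ⟨_, productCoupling_mem_couplings hν hνsum hμ hμsum⟩
    (by unfold transportCost; fun_prop)

theorem dualValue_mono (hν : ∀ i, 0 ≤ ν i) (hμ : ∀ j, 0 ≤ μ j)
    {fg fg' : (I → ℝ) × (J → ℝ)} (h : fg ≤ fg') : dualValue ν μ fg ≤ dualValue ν μ fg' :=
  add_le_add (sum_le_sum fun i _ => mul_le_mul_of_nonneg_right (h.1 i) (hν i))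
    (sum_le_sum fun j _ => mul_le_mul_of_nonneg_right (h.2 j) (hμ j))

theorem dualValue_sub_add (hνsum : ∑ i, ν i = 1) (hμsum : ∑ j, μ j = 1)
    (f : I → ℝ) (g : J → ℝ) (c : ℝ) :
    dualValue ν μ (fun i => f i - c, fun j => g j + c) = dualValue ν μ (f, g) := by
  simp only [dualValue, sub_mul, add_mul, sum_sub_distrib, sum_add_distrib, ← mul_sum, hνsum,
    hμsum]
  ring

theorem exists_bounded_dualFeasible_dualValue_ge [Nonempty I] [Nonempty J]
    (hν : ∀ i, 0 ≤ ν i) (hνsum : ∑ i, ν i = 1) (hμ : ∀ j, 0 ≤ μ j) (hμsum : ∑ j, μ j = 1)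
    {m : ℝ} (hC : ∀ i j, |C i j| ≤ m) {fg : (I → ℝ) × (J → ℝ)} (hfg : fg ∈ dualFeasible C) :
    ∃ fg' ∈ dualFeasible C ∩ (Set.univ.pi (fun _ => Set.Icc (-(2 * m)) (2 * m)) ×ˢ
        Set.univ.pi (fun _ => Set.Icc (-(3 * m)) m)),
      dualValue ν μ fg ≤ dualValue ν μ fg' := by
  obtain ⟨f, g⟩ := fg
  let i₀ := Classical.arbitrary I
  set g₁ := cTransform C f
  set f₁ := cTransform (flip C) g₁
  set f₂ := fun i => f₁ i - f₁ i₀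
  set g₂ := cTransform C f₂
  have hf₁ : ∀ i j, f₁ i + g₁ j ≤ C i j := fun i j =>
    (add_comm _ _).trans_le (add_cTransform_le (flip C) g₁ j i)
  have hf₂ : ∀ i, f₂ i ∈ Set.Icc (-(2 * m)) (2 * m) := fun i => by
    have hC' : ∀ j i, |flip C j i| ≤ m := fun j i => hC i j
    constructor <;> linarith [cTransform_le_cTransform_add hC' g₁ i i₀,
      cTransform_le_cTransform_add hC' g₁ i₀ i]
  have hg₂ : ∀ j, g₂ j ∈ Set.Icc (-(3 * m)) m := fun j => by
    obtain ⟨i, hi⟩ := exists_add_cTransform_eq C f₂ j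
    constructor
    · linarith [(hf₂ i).2, (abs_le.1 (hC i j)).1]
    · linarith [add_cTransform_le C f₂ i₀ j, (abs_le.1 (hC i₀ j)).2, show f₂ i₀ = 0 from sub_self _]
  refine ⟨(f₂, g₂), ⟨add_cTransform_le C f₂, fun i _ => hf₂ i, fun j _ => hg₂ j⟩, ?_⟩
  calc dualValue ν μ (f, g) ≤ dualValue ν μ (f₁, g₁) :=
        dualValue_mono hν hμ ⟨le_cTransform (C := flip C) fun j i =>
          (add_comm _ _).trans_le (add_cTransform_le C f i j),
          le_cTransform hfg⟩
    _ = dualValue ν μ (f₂, fun j => g₁ j + f₁ i₀) := (dualValue_sub_add hνsum hμsum _ _ _).symm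
    _ ≤ dualValue ν μ (f₂, g₂) :=
        dualValue_mono hν hμ ⟨le_rfl, le_cTransform fun i j => by linarith [hf₁ i j]⟩

theorem exists_isMaxOn_dualValue [Nonempty I] [Nonempty J]
    (hν : ∀ i, 0 ≤ ν i) (hνsum : ∑ i, ν i = 1) (hμ : ∀ j, 0 ≤ μ j) (hμsum : ∑ j, μ j = 1) :
    ∃ fg ∈ dualFeasible C, IsMaxOn (dualValue ν μ) (dualFeasible C) fg := by
  obtain ⟨m, hm⟩ := Finite.exists_le fun p : I × J => |C p.1 p.2|
  have hC : ∀ i j, |C i j| ≤ m := fun i j => hm (i, j)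
  have hcompact : IsCompact (dualFeasible C ∩ (Set.univ.pi (fun _ => Set.Icc (-(2 * m)) (2 * m)) ×ˢ
      Set.univ.pi (fun _ : J => Set.Icc (-(3 * m)) m))) :=
    ((isCompact_univ_pi fun _ => isCompact_Icc).prod
      (isCompact_univ_pi fun _ => isCompact_Icc)).inter_left isClosed_dualFeasible
  have hfeasible : ((fun _ => -m, 0) : (I → ℝ) × (J → ℝ)) ∈ dualFeasible C := fun i j => by
    simpa using neg_le_of_abs_le (hC i j)
  obtain ⟨fg₁, hfg₁, -⟩ := exists_bounded_dualFeasible_dualValue_ge hν hνsum hμ hμsum hC hfeasible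
  have hcont : Continuous (dualValue ν μ) := by unfold dualValue; fun_prop
  obtain ⟨fg₀, hfg₀, hmax⟩ := hcompact.exists_isMaxOn ⟨fg₁, hfg₁⟩ hcont.continuousOn
  refine ⟨fg₀, hfg₀.1, fun fg hfg => ?_⟩
  obtain ⟨fg', hfg', hle⟩ := exists_bounded_dualFeasible_dualValue_ge hν hνsum hμ hμsum hC hfg
  exact hle.trans (hmax hfg')

/-- Column `(i, j)` of the constraint matrix of the transport problem, with the cost row
appended. -/
def transportColumn [DecidableEq I] [DecidableEq J] (C : I → J → ℝ) (p : I × J) :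
    (I → ℝ) × (J → ℝ) × ℝ :=
  (Pi.single p.1 1, Pi.single p.2 1, C p.1 p.2)

theorem linearCombination_transportColumn [DecidableEq I] [DecidableEq J] (γ : I → J → ℝ) :
    Fintype.linearCombination ℝ (transportColumn C) (Function.uncurry γ) =
      (fun i => ∑ j, γ i j, fun j => ∑ i, γ i j, transportCost C γ) := by
  ext <;> simp [Fintype.linearCombination_apply, transportColumn, transportCost,
    Prod.fst_sum, Prod.snd_sum, Fintype.sum_prod_type, Pi.single_apply, mul_comm]

/-- The marginals and costs `(∑ j γ i j, ∑ i γ i j, ∑ C i j γ i j)` of all probability matrices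
`γ`. -/
def transportImage [DecidableEq I] [DecidableEq J] (C : I → J → ℝ) :
    Set ((I → ℝ) × (J → ℝ) × ℝ) :=
  Fintype.linearCombination ℝ (transportColumn C) '' stdSimplex ℝ (I × J)

section transportImage

variable [DecidableEq I] [DecidableEq J]

theorem convex_transportImage : Convex ℝ (transportImage C) :=
  (convex_stdSimplex ℝ _).linear_image _

theorem isCompact_transportImage : IsCompact (transportImage C) :=
  (isCompact_stdSimplex ℝ _).image (LinearMap.continuous_of_finiteDimensional _)

theorem transportColumn_mem_transportImage (p : I × J) : transportColumn C p ∈ transportImage C :=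
  ⟨_, single_mem_stdSimplex ℝ p, (Fintype.linearCombination_apply_single ..).trans (one_smul _ _)⟩

theorem mk_mem_transportImage_iff (hνsum : ∑ i, ν i = 1) {t : ℝ} :
    (ν, μ, t) ∈ transportImage C ↔ ∃ γ ∈ couplings ν μ, transportCost C γ = t := by
  constructor
  · rintro ⟨γ, hγ, hγ_image⟩
    rw [← Function.uncurry_curry γ, linearCombination_transportColumn, Prod.mk.injEq,
      Prod.mk.injEq] at hγ_image
    obtain ⟨hrow, hcol, hcost⟩ := hγ_image
    exact ⟨Function.curry γ, ⟨fun i j => hγ.1 (i, j), congrFun hrow, congrFun hcol⟩, hcost⟩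
  · rintro ⟨γ, ⟨hγ_nonneg, hγ_row, hγ_col⟩, rfl⟩
    refine ⟨Function.uncurry γ, ⟨fun p => hγ_nonneg p.1 p.2, ?_⟩, ?_⟩
    · simp only [Fintype.sum_prod_type, Function.uncurry_apply_pair, hγ_row, hνsum]
    · rw [linearCombination_transportColumn]
      exact Prod.ext (funext hγ_row) (Prod.ext (funext hγ_col) rfl)

theorem exists_dualValue_gt (hνsum : ∑ i, ν i = 1)
    {γ₀ : I → J → ℝ} (hγ₀ : γ₀ ∈ couplings ν μ) {t : ℝ}
    (ht : ∀ γ ∈ couplings ν μ, t < transportCost C γ) :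
    ∃ fg ∈ dualFeasible C, t < dualValue ν μ fg := by
  have hnotMem : ((ν, μ, t) : (I → ℝ) × (J → ℝ) × ℝ) ∉ transportImage C := by
    rw [mk_mem_transportImage_iff hνsum]
    rintro ⟨γ, hγ, hcost⟩
    exact (ht γ hγ).ne' hcost
  obtain ⟨L, u, hLt, hLA⟩ := geometric_hahn_banach_point_closed convex_transportImage
    isCompact_transportImage.isClosed hnotMem
  obtain ⟨f₀, g₀, a, hL⟩ := LinearMap.exists_prod_pi_apply_eq_sum L.toLinearMap
  simp only [ContinuousLinearMap.coe_coe] at hL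
  have hcolumn : ∀ i j, u < f₀ i + g₀ j + C i j * a := fun i j => by
    simpa [hL, transportColumn, Pi.single_apply] using
      hLA _ (transportColumn_mem_transportImage (i, j))
  have ha : 0 < a := by
    have h₀ := hLA _ ((mk_mem_transportImage_iff hνsum).2 ⟨γ₀, hγ₀, rfl⟩)
    simp only [hL] at hLt h₀
    by_contra! ha
    nlinarith [ht γ₀ hγ₀]
  refine ⟨(fun i => (u - f₀ i) / a, fun j => -g₀ j / a), fun i j => ?_, ?_⟩
  · rw [← add_div, div_le_iff₀ ha]
    linarith [hcolumn i j]
  · have hvalue : dualValue ν μ (fun i => (u - f₀ i) / a, fun j => -g₀ j / a) =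
        (u - (∑ i, ν i * f₀ i + ∑ j, μ j * g₀ j)) / a := by
      simp only [dualValue, div_mul_eq_mul_div, ← sum_div, ← add_div, sub_mul, sum_sub_distrib,
        ← mul_sum, hνsum, neg_mul, sum_neg_distrib, mul_comm (f₀ _), mul_comm (g₀ _)]
      ring
    rw [hvalue, lt_div_iff₀ ha]
    simp only [hL] at hLt
    linarith

end transportImage

end OptimalTransport

open OptimalTransport in
/-- LP strong duality for optimal transport on finite spaces: both the
primal minimum and the dual maximum are attained and equal. -/
theorem ot_strong_duality
    (I J : Type) [Fintype I] [Fintype J] [Nonempty I] [Nonempty J]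
    (C : I → J → ℝ)
    (ν : I → ℝ) (hν : ∀ i, 0 ≤ ν i) (hνsum : ∑ i, ν i = 1)
    (μ : J → ℝ) (hμ : ∀ j, 0 ≤ μ j) (hμsum : ∑ j, μ j = 1) :
    ∃ w : ℝ,
      IsLeast {c : ℝ | ∃ γ : I → J → ℝ, (∀ i j, 0 ≤ γ i j) ∧
        (∀ i, ∑ j, γ i j = ν i) ∧ (∀ j, ∑ i, γ i j = μ j) ∧
        c = ∑ i, ∑ j, C i j * γ i j} w ∧
      IsGreatest {v : ℝ | ∃ f : I → ℝ, ∃ g : J → ℝ,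
        (∀ i j, f i + g j ≤ C i j) ∧
        v = (∑ i, f i * ν i) + ∑ j, g j * μ j} w := by
  classical
  obtain ⟨γ₀, hγ₀, hmin⟩ := exists_isMinOn_transportCost (C := C) hν hνsum hμ hμsum
  obtain ⟨fg₀, hfg₀, hmax⟩ := exists_isMaxOn_dualValue (C := C) hν hνsum hμ hμsum
  have hduality : dualValue ν μ fg₀ = transportCost C γ₀ := by
    refine le_antisymm (dualValue_le_transportCost hγ₀ hfg₀) (le_of_forall_lt fun t ht => ?_)
    obtain ⟨fg, hfg, htfg⟩ := exists_dualValue_gt hνsum hγ₀ fun γ hγ => ht.trans_le (hmin hγ)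
    exact htfg.trans_le (hmax hfg)
  refine ⟨transportCost C γ₀, ⟨⟨γ₀, hγ₀.1, hγ₀.2.1, hγ₀.2.2, rfl⟩, ?_⟩,
    ⟨⟨fg₀.1, fg₀.2, hfg₀, hduality.symm⟩, ?_⟩⟩
  · rintro _ ⟨γ, hγ_nonneg, hγ_row, hγ_col, rfl⟩
    exact hmin ⟨hγ_nonneg, hγ_row, hγ_col⟩
  · rintro _ ⟨f, g, hfg, rfl⟩
    exact dualValue_le_transportCost (fg := (f, g)) hγ₀ hfg
end
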